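/- arXiv:2411.06941 — 3 statements merged into one kernel-verified Lean document; each statement's English description precedes it below -/
import Mathlib

section
/- For every finite simple graph G and all integers t ≥ 1 and b ≥ 1, the b-fold t-clustered chromatic number of G ⊠ K_t equals the t-clustered chromatic number of G ⊠ K_t ⊠ K_b: χ_b^{\underline{t}}(G ⊠ K_t) = χ^{\underline{t}}(G ⊠ K_t ⊠ K_b). -/
open SimpleGraph Finset Matrix

namespace ImproperPaper

variable {V W : Type*}

/-- The strong product of two simple graphs. -/
def strongProd (G : SimpleGraph V) (H : SimpleGraph W) : SimpleGraph (V × W) where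
  Adj p q := (p.1 = q.1 ∧ H.Adj p.2 q.2) ∨ (G.Adj p.1 q.1 ∧ p.2 = q.2) ∨
    (G.Adj p.1 q.1 ∧ H.Adj p.2 q.2)
  symm := by
    constructor
    rintro ⟨a, b⟩ ⟨x, y⟩ (⟨h1, h2⟩ | ⟨h1, h2⟩ | ⟨h1, h2⟩)
    · exact Or.inl ⟨h1.symm, h2.symm⟩
    · exact Or.inr (Or.inl ⟨h1.symm, h2.symm⟩)
    · exact Or.inr (Or.inr ⟨h1.symm, h2.symm⟩)
  loopless := by
    constructor
    rintro ⟨a, b⟩ (⟨h1, h2⟩ | ⟨h1, h2⟩ | ⟨h1, h2⟩)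
    · exact H.loopless.irrefl b h2
    · exact G.loopless.irrefl a h1
    · exact G.loopless.irrefl a h1

/-- The lexicographical product of two simple graphs. -/
def lexProd (G : SimpleGraph V) (H : SimpleGraph W) : SimpleGraph (V × W) where
  Adj p q := G.Adj p.1 q.1 ∨ (p.1 = q.1 ∧ H.Adj p.2 q.2)
  symm := by
    constructor
    rintro ⟨a, b⟩ ⟨x, y⟩ (h | ⟨h1, h2⟩)
    · exact Or.inl h.symm
    · exact Or.inr ⟨h1.symm, h2.symm⟩
  loopless := by
    constructor
    rintro ⟨a, b⟩ (h | ⟨h1, h2⟩)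
    · exact G.loopless.irrefl a h
    · exact H.loopless.irrefl b h2

instance {G : SimpleGraph V} {H : SimpleGraph W} [DecidableEq V] [DecidableEq W]
    [DecidableRel G.Adj] [DecidableRel H.Adj] : DecidableRel (strongProd G H).Adj := fun p q =>
  show Decidable ((p.1 = q.1 ∧ H.Adj p.2 q.2) ∨ (G.Adj p.1 q.1 ∧ p.2 = q.2) ∨
    (G.Adj p.1 q.1 ∧ H.Adj p.2 q.2)) from inferInstance

/-- A colouring is `d`-improper if every colour class induces a subgraph of
maximum degree at most `d`. -/
def IsImproperColoring (G : SimpleGraph V) (d : ℕ) {α : Type*} (c : V → α) : Prop :=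
  ∀ v : V, ({w | G.Adj v w ∧ c w = c v} : Set V).ncard ≤ d

/-- The `d`-improper chromatic number. -/
noncomputable def improperChromaticNumber (G : SimpleGraph V) (d : ℕ) : ℕ :=
  sInf {n | ∃ c : V → Fin n, IsImproperColoring G d c}

/-- A colouring is `t`-clustered if every monochromatic connected component has at
most `t` vertices. -/
def IsClusteredColoring (G : SimpleGraph V) (t : ℕ) {α : Type*} (c : V → α) : Prop :=
  ∀ v : V,
    ({w | Relation.ReflTransGen (fun a b => G.Adj a b ∧ c a = c b) v w} : Set V).ncard ≤ t

/-- The `t`-clustered chromatic number. -/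
noncomputable def clusteredChromaticNumber (G : SimpleGraph V) (t : ℕ) : ℕ :=
  sInf {n | ∃ c : V → Fin n, IsClusteredColoring G t c}

/-- The chromatic number: least `n` admitting a proper colouring with `n` colours. -/
noncomputable def chromNum (G : SimpleGraph V) : ℕ :=
  sInf {n | ∃ c : V → Fin n, ∀ u v, G.Adj u v → c u ≠ c v}

/-- The `b`-fold `d`-improper chromatic number: least number of colours in an assignment
of `b` colours to each vertex such that, for every colour `x`, the set of vertices whose
colour set contains `x` induces a subgraph of maximum degree at most `d`. -/
noncomputable def bFoldImproperChromaticNumber (G : SimpleGraph V) (b d : ℕ) : ℕ :=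
  sInf {n | ∃ c : V → Finset (Fin n), (∀ v, (c v).card = b) ∧
    ∀ v : V, ∀ x ∈ c v, ({w | G.Adj v w ∧ x ∈ c w} : Set V).ncard ≤ d}

/-- The (proper) `b`-fold chromatic number. -/
noncomputable def bFoldChromaticNumber (G : SimpleGraph V) (b : ℕ) : ℕ :=
  bFoldImproperChromaticNumber G b 0

/-- The `b`-fold `t`-clustered chromatic number. -/
noncomputable def bFoldClusteredChromaticNumber (G : SimpleGraph V) (b t : ℕ) : ℕ :=
  sInf {n | ∃ c : V → Finset (Fin n), (∀ v, (c v).card = b) ∧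
    ∀ x : Fin n, ∀ v : V, x ∈ c v →
      ({w | Relation.ReflTransGen (fun a b' => G.Adj a b' ∧ x ∈ c a ∧ x ∈ c b') v w} :
        Set V).ncard ≤ t}

/-- The fractional chromatic number `χ_f(G) = inf { χ_b(G)/b : b ≥ 1 }`. -/
noncomputable def fracChromaticNumber (G : SimpleGraph V) : ℝ :=
  sInf {x : ℝ | ∃ b : ℕ, 0 < b ∧ x = (bFoldChromaticNumber G b : ℝ) / b}

/-- The fractional `d`-improper chromatic number. -/
noncomputable def fracImproperChromaticNumber (G : SimpleGraph V) (d : ℕ) : ℝ :=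
  sInf {x : ℝ | ∃ b : ℕ, 0 < b ∧ x = (bFoldImproperChromaticNumber G b d : ℝ) / b}

/-- The fractional `t`-clustered chromatic number. -/
noncomputable def fracClusteredChromaticNumber (G : SimpleGraph V) (t : ℕ) : ℝ :=
  sInf {x : ℝ | ∃ b : ℕ, 0 < b ∧ x = (bFoldClusteredChromaticNumber G b t : ℝ) / b}

/-- `lam` lists the eigenvalues of the Hermitian matrix `A` (with multiplicity) in
non-increasing order. -/
def IsEigList {n : ℕ} {A : Matrix (Fin n) (Fin n) ℝ} (hA : A.IsHermitian)
    (lam : Fin n → ℝ) : Prop :=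
  Antitone lam ∧ ∃ σ : Equiv.Perm (Fin n), lam = hA.eigenvalues ∘ σ

/-- The largest size of a vertex subset inducing a subgraph of maximum degree at most `d`. -/
noncomputable def maxImproperIndep (G : SimpleGraph V) (d : ℕ) : ℕ :=
  sSup {k | ∃ s : Set V, s.ncard = k ∧ ∀ v ∈ s, ({w | w ∈ s ∧ G.Adj v w} : Set V).ncard ≤ d}

end ImproperPaper

/-! Both sides are least numbers of colours, so it suffices to turn colourings of either kind
into colourings of the other with the same set of colours.

A `b`-fold `t`-clustered colouring `c` of `G ⊠ K_t` gives a `t`-clustered colouring of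
`G ⊠ K_t ⊠ K_b` by giving `(u, j)` the `j`-th colour of `c u`: the colours on `{u} × K_b` are
distinct, so a monochromatic component projects injectively onto a component of `G ⊠ K_t`
carrying that colour.

Conversely, in a `t`-clustered colouring of `G ⊠ K_t ⊠ K_b` the fibre over a vertex `v` of `G`
is a clique on `b t` vertices, so no colour occurs more than `t` times on it. Sorting the
fibre's colours and giving `(v, k)` those at positions `k, k + t, …, k + (b - 1) t` therefore
gives every vertex `b` distinct colours. A component of colour `x` in `G ⊠ K_t` embeds into a
monochromatic component of the product by sending `(v, k)` to the vertex at the one of its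
positions that carries `x`. -/

lemma Monotone.val_sub_lt_of_apply_eq {α : Type*} [PartialOrder α] {n t : ℕ} {g : Fin n → α}
    (hg : Monotone g) (hfib : ∀ x, {p | g p = x}.ncard ≤ t) {p q : Fin n} (hpq : p ≤ q)
    (h : g p = g q) : (q : ℕ) - p < t := by
  have hsub : Set.Icc p q ⊆ {r | g r = g p} := fun r hr => le_antisymm (h ▸ hg hr.2) (hg hr.1)
  have hcard := (Set.ncard_le_ncard hsub (Set.toFinite _)).trans (hfib (g p))
  rw [← Finset.coe_Icc, Set.ncard_coe_finset, Fin.card_Icc] at hcard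
  omega

-- `finProdFinEquiv (i, k)` is the position `k + t * i`.
lemma Monotone.injective_comp_finProdFinEquiv {α : Type*} [PartialOrder α] {b t : ℕ}
    {g : Fin (b * t) → α} (hg : Monotone g) (hfib : ∀ x, {p | g p = x}.ncard ≤ t) (k : Fin t) :
    Function.Injective fun i : Fin b => g (finProdFinEquiv (i, k)) := by
  intro i i' h
  wlog hlt : i < i' generalizing i i'
  · rcases (not_lt.1 hlt).lt_or_eq with hlt' | heq
    · exact (this h.symm hlt').symm
    · exact heq.symm
  have hval : ∀ j : Fin b, ((finProdFinEquiv (j, k) : Fin (b * t)) : ℕ) = k + t * j := fun _ => rfl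
  have hle : finProdFinEquiv (i, k) ≤ finProdFinEquiv (i', k) := by
    rw [Fin.le_def, hval, hval]
    gcongr
    exact hlt.le
  have hgap := hg.val_sub_lt_of_apply_eq hfib hle h
  rw [hval, hval, Nat.add_sub_add_left, ← Nat.mul_sub] at hgap
  have : (i' : ℕ) - i < 1 := Nat.lt_of_mul_lt_mul_left (by rwa [mul_one])
  omega

namespace ImproperPaper

open Relation

section Reachability

variable {α β : Type*} {r : α → α → Prop}

lemma eq_of_reflTransGen_and_eq {γ : Type*} {c : α → γ} {a b : α}
    (h : ReflTransGen (fun x y => r x y ∧ c x = c y) a b) : c a = c b := by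
  simpa [reflTransGen_eq_self] using h.lift c fun _ _ hxy => hxy.2

lemma ncard_reflTransGen_le_of_injOn [Finite β] {s : β → β → Prop} (f : α → β) {a : α}
    (hmap : ∀ x y, ReflTransGen r a x → r x y → s (f x) (f y))
    (hinj : Set.InjOn f {x | ReflTransGen r a x}) :
    {x | ReflTransGen r a x}.ncard ≤ {y | ReflTransGen s (f a) y}.ncard := by
  refine Set.ncard_le_ncard_of_injOn f (fun x hx => ?_) hinj (Set.toFinite _)
  induction hx with
  | refl => exact ReflTransGen.refl
  | tail hax hxy ih => exact ih.tail (hmap _ _ hax hxy)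

end Reachability

section StrongProduct

variable {V W : Type*} (G : SimpleGraph V)

lemma strongProd_top_adj {p q : V × W} :
    (strongProd G (⊤ : SimpleGraph W)).Adj p q ↔ G.Adj p.1 q.1 ∨ (p.1 = q.1 ∧ p.2 ≠ q.2) := by
  by_cases h : p.2 = q.2 <;> simp [strongProd, h, or_comm]

lemma strongProd_top_top_adj {X : Type*} {p q : (V × W) × X} :
    (strongProd (strongProd G (⊤ : SimpleGraph W)) (⊤ : SimpleGraph X)).Adj p q ↔
      G.Adj p.1.1 q.1.1 ∨ (p.1.1 = q.1.1 ∧ p ≠ q) := by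
  simp only [strongProd_top_adj, ne_eq, Prod.ext_iff]
  tauto

end StrongProduct

section BFoldColoring

variable {V : Type*}

def IsBFoldClusteredColoring (G : SimpleGraph V) (b t : ℕ) {α : Type*} (c : V → Finset α) :
    Prop :=
  (∀ v, (c v).card = b) ∧ ∀ x : α, ∀ v : V, x ∈ c v →
    ({w | ReflTransGen (fun a b' => G.Adj a b' ∧ x ∈ c a ∧ x ∈ c b') v w} : Set V).ncard ≤ t

lemma bFoldClusteredChromaticNumber_eq_sInf (G : SimpleGraph V) (b t : ℕ) :
    bFoldClusteredChromaticNumber G b t =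
      sInf {n | ∃ c : V → Finset (Fin n), IsBFoldClusteredColoring G b t c} :=
  rfl

end BFoldColoring

section FromBFold

variable {U α : Type*} [Finite U] [LinearOrder α] {H : SimpleGraph U} {b t : ℕ}
  {c : U → Finset α}

theorem IsBFoldClusteredColoring.isClusteredColoring_strongProd_top
    (hc : IsBFoldClusteredColoring H b t c) :
    IsClusteredColoring (strongProd H (⊤ : SimpleGraph (Fin b))) t
      (fun p => (c p.1).orderEmbOfFin (hc.1 p.1) p.2) := by
  intro p₀
  set φ : U × Fin b → α := fun p => (c p.1).orderEmbOfFin (hc.1 p.1) p.2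
  have hmem : ∀ p, φ p ∈ c p.1 := fun p => (c p.1).orderEmbOfFin_mem _ p.2
  have hcolour : ∀ p, ReflTransGen (fun a a' => (strongProd H ⊤).Adj a a' ∧ φ a = φ a') p₀ p →
      φ p = φ p₀ := fun p hp => (eq_of_reflTransGen_and_eq hp).symm
  refine (ncard_reflTransGen_le_of_injOn Prod.fst ?_ ?_).trans (hc.2 _ p₀.1 (hmem p₀))
  · rintro p q hp ⟨hpq, hφ⟩
    refine ⟨?_, hcolour p hp ▸ hmem p, hcolour p hp ▸ hφ ▸ hmem q⟩
    rcases (strongProd_top_adj H).1 hpq with h | ⟨h₁, h₂⟩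
    · exact h
    · obtain ⟨u, j⟩ := p
      obtain ⟨u', j'⟩ := q
      obtain rfl : u = u' := h₁
      exact absurd (((c u).orderEmbOfFin (hc.1 u)).injective hφ) h₂
  · rintro ⟨u, j⟩ hp ⟨u', j'⟩ hq (rfl : u = u')
    exact congrArg (Prod.mk u)
      (((c u).orderEmbOfFin (hc.1 u)).injective ((hcolour _ hp).trans (hcolour _ hq).symm))

end FromBFold

section FibreSorting

variable {V α : Type*} {t b : ℕ}

def fibreVertex (v : V) (p : Fin (b * t)) : (V × Fin t) × Fin b :=
  ((v, (finProdFinEquiv.symm p).2), (finProdFinEquiv.symm p).1)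

lemma fibreVertex_inj {v v' : V} {p p' : Fin (b * t)} :
    fibreVertex v p = fibreVertex v' p' ↔ v = v' ∧ p = p' := by
  constructor
  · intro h
    simp only [fibreVertex, Prod.mk.injEq] at h
    exact ⟨h.1.1, finProdFinEquiv.symm.injective (Prod.ext h.2 h.1.2)⟩
  · rintro ⟨rfl, rfl⟩
    rfl

variable [LinearOrder α] (φ : (V × Fin t) × Fin b → α)

def sortedFibreVertex (v : V) (p : Fin (b * t)) : (V × Fin t) × Fin b :=
  fibreVertex v (Tuple.sort (φ ∘ fibreVertex v) p)

lemma sortedFibreVertex_inj {v v' : V} {p p' : Fin (b * t)} :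
    sortedFibreVertex φ v p = sortedFibreVertex φ v' p' ↔ v = v' ∧ p = p' := by
  constructor
  · intro h
    obtain ⟨rfl, h⟩ := fibreVertex_inj.1 h
    exact ⟨rfl, (Tuple.sort _).injective h⟩
  · rintro ⟨rfl, rfl⟩
    rfl

def slotVertex (u : V × Fin t) (i : Fin b) : (V × Fin t) × Fin b :=
  sortedFibreVertex φ u.1 (finProdFinEquiv (i, u.2))

lemma slotVertex_inj {u u' : V × Fin t} {i i' : Fin b} :
    slotVertex φ u i = slotVertex φ u' i' ↔ u = u' ∧ i = i' := by
  rw [slotVertex, slotVertex, sortedFibreVertex_inj, EmbeddingLike.apply_eq_iff_eq, Prod.mk.injEq,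
    Prod.ext_iff (x := u)]
  tauto

def slotColours (u : V × Fin t) : Finset α :=
  univ.image (φ ∘ slotVertex φ u)

variable (G : SimpleGraph V)

lemma slotVertex_adj {u u' : V × Fin t} (h : (strongProd G (⊤ : SimpleGraph (Fin t))).Adj u u')
    (i i' : Fin b) :
    (strongProd (strongProd G (⊤ : SimpleGraph (Fin t))) (⊤ : SimpleGraph (Fin b))).Adj
      (slotVertex φ u i) (slotVertex φ u' i') := by
  rw [strongProd_top_top_adj]
  rcases (strongProd_top_adj G).1 h with hG | ⟨h₁, h₂⟩
  · exact Or.inl hG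
  · exact Or.inr ⟨h₁, fun h => h₂ (congrArg Prod.snd ((slotVertex_inj φ).1 h).1)⟩

variable [Finite V] {φ}

lemma ncard_setOf_apply_sortedFibreVertex_eq_le
    (hφ : IsClusteredColoring
      (strongProd (strongProd G (⊤ : SimpleGraph (Fin t))) (⊤ : SimpleGraph (Fin b))) t φ)
    (v : V) (x : α) : {p | φ (sortedFibreVertex φ v p) = x}.ncard ≤ t := by
  rcases Set.eq_empty_or_nonempty {p | φ (sortedFibreVertex φ v p) = x} with h | ⟨p₀, hp₀⟩
  · simp [h]
  refine (Set.ncard_le_ncard_of_injOn (sortedFibreVertex φ v) (fun p hp => ?_)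
    (fun p _ q _ h => ((sortedFibreVertex_inj φ).1 h).2) (Set.toFinite _)).trans
    (hφ (sortedFibreVertex φ v p₀))
  rcases eq_or_ne p₀ p with rfl | hne
  · exact ReflTransGen.refl
  · refine ReflTransGen.single ⟨(strongProd_top_top_adj G).2 (Or.inr ⟨rfl, ?_⟩), hp₀.trans hp.symm⟩
    exact fun h => hne ((sortedFibreVertex_inj φ).1 h).2

lemma card_slotColours
    (hφ : IsClusteredColoring
      (strongProd (strongProd G (⊤ : SimpleGraph (Fin t))) (⊤ : SimpleGraph (Fin b))) t φ)
    (u : V × Fin t) : (slotColours φ u).card = b := by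
  have hinj : Function.Injective (φ ∘ slotVertex φ u) :=
    (Tuple.monotone_sort (φ ∘ fibreVertex u.1)).injective_comp_finProdFinEquiv
      (ncard_setOf_apply_sortedFibreVertex_eq_le G hφ u.1) u.2
  rw [slotColours, card_image_of_injective _ hinj, card_univ, Fintype.card_fin]

theorem IsClusteredColoring.isBFoldClusteredColoring_slotColours
    (hφ : IsClusteredColoring
      (strongProd (strongProd G (⊤ : SimpleGraph (Fin t))) (⊤ : SimpleGraph (Fin b))) t φ) :
    IsBFoldClusteredColoring (strongProd G (⊤ : SimpleGraph (Fin t))) b t (slotColours φ) := by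
  refine ⟨card_slotColours G hφ, fun x u₀ hx₀ => ?_⟩
  have hmem : ∀ u, x ∈ slotColours φ u ↔ ∃ i, φ (slotVertex φ u i) = x := by
    simp [slotColours]
  obtain ⟨i₀, -⟩ := (hmem u₀).1 hx₀
  have : Nonempty (Fin b) := ⟨i₀⟩
  set f : V × Fin t → (V × Fin t) × Fin b :=
    fun u => slotVertex φ u (Function.invFun (φ ∘ slotVertex φ u) x)
  have hf : ∀ u, x ∈ slotColours φ u → φ (f u) = x :=
    fun u hu => Function.invFun_eq ((hmem u).1 hu)
  refine (ncard_reflTransGen_le_of_injOn f ?_ fun u _ u' _ h => ((slotVertex_inj φ).1 h).1).trans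
    (hφ (f u₀))
  rintro u u' - ⟨hadj, hu, hu'⟩
  exact ⟨slotVertex_adj φ G hadj _ _, (hf u hu).trans (hf u' hu').symm⟩

end FibreSorting

end ImproperPaper

open ImproperPaper in

theorem stmt_8_general {V : Type*} [Fintype V] (G : SimpleGraph V) (t b : ℕ) :
    bFoldClusteredChromaticNumber (strongProd G (⊤ : SimpleGraph (Fin t))) b t =
      clusteredChromaticNumber
        (strongProd (strongProd G (⊤ : SimpleGraph (Fin t)))
          (⊤ : SimpleGraph (Fin b))) t := by
  rw [bFoldClusteredChromaticNumber_eq_sInf, clusteredChromaticNumber]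
  congr 1
  ext n
  exact ⟨fun ⟨_, hc⟩ => ⟨_, hc.isClusteredColoring_strongProd_top⟩,
    fun ⟨_, hφ⟩ => ⟨_, hφ.isBFoldClusteredColoring_slotColours G⟩⟩

open ImproperPaper in
theorem stmt_8 {V : Type*} [Fintype V] (G : SimpleGraph V) (t b : ℕ) (ht : 1 ≤ t)
    (hb : 1 ≤ b) :
    bFoldClusteredChromaticNumber (strongProd G (⊤ : SimpleGraph (Fin t))) b t =
      clusteredChromaticNumber
        (strongProd (strongProd G (⊤ : SimpleGraph (Fin t)))
          (⊤ : SimpleGraph (Fin b))) t :=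
  stmt_8_general G t b
end

section
/- For every finite simple graph G on n vertices and all positive integers d and m with m ≤ n, the d-improper chromatic number satisfies χ^d(G) ≥ 1 + (−dm + Σ_{i=1}^m λ_i)/(dm + Σ_{i=1}^m (λ_i + μ_i − θ_i)), where λ₁ ≥ … ≥ λₙ are the adjacency eigenvalues, μ₁ ≥ … ≥ μₙ are the Laplacian eigenvalues and θ₁ ≥ … ≥ θₙ are the signless Laplacian eigenvalues of G. -/
open SimpleGraph Finset Matrix

/-!
Call `P` a fractional projection of rank `m` if `0 ≤ P ≤ 1` as a quadratic form and `tr P = m`.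
Then `tr (M P) = Σⱼ λⱼ(M) wⱼ` with weights `wⱼ ∈ [0, 1]` summing to `m`, so `tr (M P)` is at most
the sum of the `m` largest eigenvalues of `M` (Ky Fan), and at most `d m` when `M ≤ d`.

For a `d`-improper colouring `c` with `K` colours, let `A_c` keep the entries of `A` inside colour
classes, so `A_c ≤ d`. The twists `D⋆ P D`, `D = diag (ω ^ (l c(v)))`, `ω = exp (2πi / K)`, are
fractional projections that average to the pinching of `P` along the classes; Ky Fan for `L` at
`l = 1, …, K - 1` gives `K tr ((D - A_c) P) ≤ tr (L P) + (K - 1) Σμ`, i.e.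
`(K - 1) tr (D P) + tr (A P) ≤ (K - 1) Σμ + K d m`. For `P` the projection onto the top `m`
eigenvectors of `Q`, `tr (D P) + tr (A P) = Σθ` and `tr (A P) ≤ Σλ`, and the bound follows.
Pinching with one colour per vertex gives `tr (D P) ≤ Σμ`, so `Σθ ≤ Σλ + Σμ` and the denominator
is nonnegative.
-/

namespace ImproperPaper

section FracProj

variable {ι : Type*} [Fintype ι]

/-- The symmetric such matrices form the convex hull of the rank-`m` orthogonal projections. -/
structure IsFracProj (P : Matrix ι ι ℝ) (m : ℕ) : Prop where
  nonneg : ∀ x, 0 ≤ x ⬝ᵥ P *ᵥ x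
  le_dotProduct_self : ∀ x, x ⬝ᵥ P *ᵥ x ≤ x ⬝ᵥ x
  trace_eq : P.trace = m

lemma dotProduct_mulVec_conj (W A : Matrix ι ι ℝ) (x : ι → ℝ) :
    x ⬝ᵥ (W * A * Wᵀ) *ᵥ x = (Wᵀ *ᵥ x) ⬝ᵥ A *ᵥ (Wᵀ *ᵥ x) := by
  rw [← mulVec_mulVec, ← mulVec_mulVec, dotProduct_mulVec, mulVec_transpose]

lemma IsFracProj.conj [DecidableEq ι] {P W : Matrix ι ι ℝ} {m : ℕ} (hP : IsFracProj P m)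
    (hWWt : W * Wᵀ = 1) (hWtW : Wᵀ * W = 1) : IsFracProj (W * P * Wᵀ) m where
  nonneg x := by
    rw [dotProduct_mulVec_conj]
    exact hP.nonneg _
  le_dotProduct_self x := by
    have hnorm : (Wᵀ *ᵥ x) ⬝ᵥ (Wᵀ *ᵥ x) = x ⬝ᵥ x := by
      rw [dotProduct_mulVec, vecMul_transpose, mulVec_mulVec, hWWt, one_mulVec]
    rw [dotProduct_mulVec_conj, ← hnorm]
    exact hP.le_dotProduct_self _
  trace_eq := by rw [trace_mul_cycle, hWtW, Matrix.one_mul, hP.trace_eq]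

lemma IsFracProj.diag_mem_Icc [DecidableEq ι] {P : Matrix ι ι ℝ} {m : ℕ} (hP : IsFracProj P m)
    (j : ι) : P j j ∈ Set.Icc 0 1 := by
  have hj : P j j = Pi.single j 1 ⬝ᵥ P *ᵥ Pi.single j 1 := by
    rw [single_dotProduct, mulVec_single_one, one_mul, col_apply]
  refine ⟨hj ▸ hP.nonneg _, ?_⟩
  have h := hP.le_dotProduct_self (Pi.single j 1)
  rwa [← hj, single_dotProduct, Pi.single_eq_same, one_mul] at h

lemma isFracProj_diagonal_indicator [DecidableEq ι] (S : Finset ι) :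
    IsFracProj (diagonal fun j => if j ∈ S then (1 : ℝ) else 0) S.card where
  nonneg x := by
    simp only [mulVec_diagonal, dotProduct]
    exact sum_nonneg fun j _ => by split_ifs <;> nlinarith [mul_self_nonneg (x j)]
  le_dotProduct_self x := by
    simp only [mulVec_diagonal, dotProduct]
    exact sum_le_sum fun j _ => by split_ifs <;> nlinarith [mul_self_nonneg (x j)]
  trace_eq := by simp [trace_diagonal]

end FracProj

section Spectral

variable {ι : Type*} [Fintype ι] [DecidableEq ι] {M : Matrix ι ι ℝ}

noncomputable abbrev eigenvectorMatrix (hM : M.IsHermitian) : Matrix ι ι ℝ :=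
  hM.eigenvectorUnitary

lemma eigenvectorMatrix_mul_transpose (hM : M.IsHermitian) :
    eigenvectorMatrix hM * (eigenvectorMatrix hM)ᵀ = 1 := by
  rw [← conjTranspose_eq_transpose_of_trivial]
  exact mem_unitaryGroup_iff.mp hM.eigenvectorUnitary.prop

lemma transpose_mul_eigenvectorMatrix (hM : M.IsHermitian) :
    (eigenvectorMatrix hM)ᵀ * eigenvectorMatrix hM = 1 := by
  rw [← conjTranspose_eq_transpose_of_trivial]
  exact mem_unitaryGroup_iff'.mp hM.eigenvectorUnitary.prop

lemma eq_eigenvectorMatrix_mul_diagonal (hM : M.IsHermitian) :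
    M = eigenvectorMatrix hM * diagonal hM.eigenvalues * (eigenvectorMatrix hM)ᵀ := by
  rw [← conjTranspose_eq_transpose_of_trivial]
  exact hM.spectral_theorem

lemma trace_mul_eq_sum_eigenvalues_mul (hM : M.IsHermitian) (P : Matrix ι ι ℝ) :
    (M * P).trace = ∑ j, hM.eigenvalues j *
      ((eigenvectorMatrix hM)ᵀ * P * eigenvectorMatrix hM) j j := by
  conv_lhs => rw [eq_eigenvectorMatrix_mul_diagonal hM]
  rw [Matrix.mul_assoc, trace_mul_comm, ← Matrix.mul_assoc, trace_mul_comm, ← Matrix.mul_assoc,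
    Matrix.mul_assoc (diagonal _)]
  simp [trace, diagonal_mul]

lemma IsFracProj.transpose_mul_mul_eigenvectorMatrix (hM : M.IsHermitian) {P : Matrix ι ι ℝ}
    {m : ℕ} (hP : IsFracProj P m) :
    IsFracProj ((eigenvectorMatrix hM)ᵀ * P * eigenvectorMatrix hM) m := by
  simpa using hP.conj (W := (eigenvectorMatrix hM)ᵀ)
    (by simpa using transpose_mul_eigenvectorMatrix hM)
    (by simpa using eigenvectorMatrix_mul_transpose hM)

lemma eigenvalues_le_of_dotProduct_mulVec_le (hM : M.IsHermitian) {d : ℝ}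
    (hMd : ∀ x, x ⬝ᵥ M *ᵥ x ≤ d * (x ⬝ᵥ x)) (j : ι) : hM.eigenvalues j ≤ d := by
  have hunit : (hM.eigenvectorBasis j : ι → ℝ) ⬝ᵥ hM.eigenvectorBasis j = 1 := by
    have h1 : inner ℝ (hM.eigenvectorBasis j) (hM.eigenvectorBasis j) = 1 := by
      rw [real_inner_self_eq_norm_sq, hM.eigenvectorBasis.orthonormal.1 j, one_pow]
    rwa [EuclideanSpace.inner_eq_star_dotProduct, star_trivial] at h1
  simpa [hM.eigenvalues_eq j, hunit] using hMd (hM.eigenvectorBasis j)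

lemma trace_mul_le_of_dotProduct_mulVec_le (hM : M.IsHermitian) {d : ℝ}
    (hMd : ∀ x, x ⬝ᵥ M *ᵥ x ≤ d * (x ⬝ᵥ x)) {P : Matrix ι ι ℝ} {m : ℕ} (hP : IsFracProj P m) :
    (M * P).trace ≤ d * m := by
  have hW := hP.transpose_mul_mul_eigenvectorMatrix hM
  rw [trace_mul_eq_sum_eigenvalues_mul hM, ← hW.trace_eq, trace, mul_sum]
  exact sum_le_sum fun j _ => mul_le_mul_of_nonneg_right
    (eigenvalues_le_of_dotProduct_mulVec_le hM hMd j) (hW.diag_mem_Icc j).1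

end Spectral

section KyFan

variable {n : ℕ}

def leadingSum (ν : Fin n → ℝ) (m : ℕ) : ℝ :=
  ∑ i ∈ univ.filter (fun i : Fin n => (i : ℕ) < m), ν i

lemma sum_mul_le_leadingSum {m : ℕ} (hm : 0 < m) (hmn : m ≤ n) {ν s : Fin n → ℝ}
    (hν : Antitone ν) (hs : ∀ i, s i ∈ Set.Icc 0 1) (hsum : ∑ i, s i = m) :
    ∑ i, ν i * s i ≤ leadingSum ν m := by
  -- compare termwise, `c` separating the first `m` entries of `ν` from the others
  set c := ν ⟨m - 1, by omega⟩
  have hpt : ∀ i : Fin n, ν i * s i ≤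
      (if (i : ℕ) < m then ν i else 0) + c * (s i - if (i : ℕ) < m then 1 else 0) := by
    intro i
    obtain ⟨hs0, hs1⟩ := hs i
    split_ifs with hi
    · have : c ≤ ν i := hν (Fin.le_def.mpr (by simp; omega))
      nlinarith
    · have : ν i ≤ c := hν (Fin.le_def.mpr (by simp; omega))
      nlinarith
  calc ∑ i, ν i * s i
      ≤ ∑ i : Fin n, ((if (i : ℕ) < m then ν i else 0) +
          c * (s i - if (i : ℕ) < m then 1 else 0)) := sum_le_sum fun i _ => hpt i
    _ = leadingSum ν m := by
        rw [sum_add_distrib, ← mul_sum, sum_sub_distrib, hsum, sum_boole, Fin.card_filter_val_lt,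
          ← sum_filter]
        simp [leadingSum, hmn]

variable {M P : Matrix (Fin n) (Fin n) ℝ} {hM : M.IsHermitian} {ν : Fin n → ℝ} {m : ℕ}

lemma trace_mul_le_leadingSum (hm : 0 < m) (hmn : m ≤ n) (hν : IsEigList hM ν)
    (hP : IsFracProj P m) : (M * P).trace ≤ leadingSum ν m := by
  obtain ⟨hanti, σ, rfl⟩ := hν
  have hW := hP.transpose_mul_mul_eigenvectorMatrix hM
  rw [trace_mul_eq_sum_eigenvalues_mul hM, ← Equiv.sum_comp σ]
  refine sum_mul_le_leadingSum hm hmn hanti (fun i => hW.diag_mem_Icc _) ?_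
  rw [← hW.trace_eq, trace, ← Equiv.sum_comp σ (diag _)]
  rfl

lemma exists_isFracProj_trace_mul_eq (hmn : m ≤ n) (hν : IsEigList hM ν) :
    ∃ P, IsFracProj P m ∧ (M * P).trace = leadingSum ν m := by
  obtain ⟨-, σ, rfl⟩ := hν
  set U := eigenvectorMatrix hM
  set S := (univ.filter fun i : Fin n => (i : ℕ) < m).map σ.toEmbedding
  have hS : S.card = m := by simp [S, Fin.card_filter_val_lt, hmn]
  have hUtU := transpose_mul_eigenvectorMatrix hM
  refine ⟨U * diagonal (fun j => if j ∈ S then 1 else 0) * Uᵀ,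
    hS ▸ (isFracProj_diagonal_indicator S).conj (eigenvectorMatrix_mul_transpose hM) hUtU, ?_⟩
  rw [trace_mul_eq_sum_eigenvalues_mul hM, ← Matrix.mul_assoc, ← Matrix.mul_assoc, hUtU,
    Matrix.one_mul, Matrix.mul_assoc, hUtU, Matrix.mul_one, leadingSum, sum_filter,
    ← Equiv.sum_comp σ]
  simp [S, diagonal_apply_eq]

end KyFan

section Pinching

open Real

lemma sum_range_cos_two_pi_mul_div {K : ℕ} (hK : K ≠ 0) (j : ℤ) :
    ∑ l ∈ range K, cos (2 * π * l * j / K) = if (K : ℤ) ∣ j then (K : ℝ) else 0 := by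
  have hζ := Complex.isPrimitiveRoot_exp K hK
  set z : ℂ := Complex.exp (2 * π * Complex.I / K) ^ j
  have hcos : ∀ l : ℕ, cos (2 * π * l * j / K) = (z ^ l).re := by
    intro l
    rw [← zpow_natCast, ← _root_.zpow_mul, ← Complex.exp_int_mul,
      show ((j * l : ℤ) : ℂ) * (2 * π * Complex.I / K) = ((2 * π * l * j / K : ℝ) : ℂ) *
        Complex.I by push_cast; ring,
      Complex.exp_ofReal_mul_I_re]
  simp_rw [hcos, ← Complex.re_sum]
  split_ifs with hdvd
  · simp [z, (hζ.zpow_eq_one_iff_dvd j).2 hdvd]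
  · have hz1 : z ≠ 1 := mt (hζ.zpow_eq_one_iff_dvd j).1 hdvd
    have hzK : z ^ K = 1 := by
      rw [← zpow_natCast, ← _root_.zpow_mul]
      exact (hζ.zpow_eq_one_iff_dvd _).2 (dvd_mul_left _ _)
    simp [geom_sum_eq hz1, hzK]

variable {ι : Type*} {K : ℕ} (c : ι → Fin K)

def pinch (M : Matrix ι ι ℝ) : Matrix ι ι ℝ :=
  of fun u v => if c u = c v then M u v else 0

lemma trace_mul_pinch [Fintype ι] (M P : Matrix ι ι ℝ) :
    (M * pinch c P).trace = (pinch c M * P).trace := by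
  simp only [trace, Matrix.diag, mul_apply, pinch, of_apply]
  exact sum_congr rfl fun u _ => sum_congr rfl fun v _ => by
    by_cases h : c u = c v <;> simp [h, eq_comm]

lemma isSymm_pinch {M : Matrix ι ι ℝ} (hM : M.IsSymm) : (pinch c M).IsSymm :=
  IsSymm.ext fun u v => by by_cases h : c u = c v <;> simp [pinch, h, Ne.symm, hM.apply u v]

noncomputable def phase (l : ℕ) (v : ι) : ℝ := 2 * π * l * (c v : ℕ) / K

/-- The real part of `D⋆ P D` for the diagonal unitary `D = diag (ω ^ (l * c v))`,
`ω = exp (2πi / K)`. -/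
noncomputable def twist (P : Matrix ι ι ℝ) (l : ℕ) : Matrix ι ι ℝ :=
  of fun u v => P u v * cos (phase c l v - phase c l u)

lemma twist_zero (P : Matrix ι ι ℝ) : twist c P 0 = P := by
  ext u v
  simp [twist, phase]

lemma dotProduct_twist_mulVec [Fintype ι] (P : Matrix ι ι ℝ) (l : ℕ) (x : ι → ℝ) :
    x ⬝ᵥ twist c P l *ᵥ x =
      (fun v => x v * cos (phase c l v)) ⬝ᵥ P *ᵥ (fun v => x v * cos (phase c l v)) +
      (fun v => x v * sin (phase c l v)) ⬝ᵥ P *ᵥ (fun v => x v * sin (phase c l v)) := by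
  simp only [dotProduct, mulVec, twist, of_apply, mul_sum, ← sum_add_distrib, cos_sub]
  exact sum_congr rfl fun u _ => sum_congr rfl fun v _ => by ring

lemma IsFracProj.twist [Fintype ι] {P : Matrix ι ι ℝ} {m : ℕ} (hP : IsFracProj P m) (l : ℕ) :
    IsFracProj (twist c P l) m where
  nonneg x := by
    rw [dotProduct_twist_mulVec]
    exact add_nonneg (hP.nonneg _) (hP.nonneg _)
  le_dotProduct_self x := by
    have hsplit : x ⬝ᵥ x =
        (fun v => x v * cos (phase c l v)) ⬝ᵥ (fun v => x v * cos (phase c l v)) +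
        (fun v => x v * sin (phase c l v)) ⬝ᵥ (fun v => x v * sin (phase c l v)) := by
      simp only [dotProduct, ← sum_add_distrib]
      exact sum_congr rfl fun v _ => by
        linear_combination (x v * x v) * (sin_sq_add_cos_sq (phase c l v)).symm
    rw [dotProduct_twist_mulVec, hsplit]
    exact add_le_add (hP.le_dotProduct_self _) (hP.le_dotProduct_self _)
  trace_eq := by simpa [trace, ImproperPaper.twist] using hP.trace_eq

lemma sum_range_twist [Fintype ι] (hK : K ≠ 0) (P : Matrix ι ι ℝ) :
    ∑ l ∈ range K, twist c P l = (K : ℝ) • pinch c P := by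
  ext u v
  have hphase : ∀ l : ℕ,
      phase c l v - phase c l u = 2 * π * l * ((c v : ℤ) - (c u : ℤ) : ℤ) / K := by
    intro l
    simp only [phase]
    push_cast
    ring
  -- since `|c v - c u| < K`
  have hdvd : (K : ℤ) ∣ (c v : ℤ) - (c u : ℤ) ↔ c u = c v := by
    refine ⟨fun h => ?_, fun h => by simp [h]⟩
    have := Int.eq_zero_of_abs_lt_dvd h (abs_sub_lt_iff.mpr (by omega))
    exact Fin.ext (by omega)
  simp only [Matrix.sum_apply, twist, of_apply, Matrix.smul_apply, pinch, smul_eq_mul, ← mul_sum,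
    hphase, sum_range_cos_two_pi_mul_div hK, hdvd]
  split_ifs <;> ring

lemma pinching_trace_le [Fintype ι] (hK : K ≠ 0) {M P : Matrix ι ι ℝ} {m : ℕ} {S : ℝ}
    (hS : ∀ P', IsFracProj P' m → (M * P').trace ≤ S) (hP : IsFracProj P m) :
    K * (pinch c M * P).trace ≤ (M * P).trace + (K - 1) * S := by
  obtain ⟨K, rfl⟩ := Nat.exists_eq_add_one_of_ne_zero hK
  calc ((K + 1 : ℕ) : ℝ) * (pinch c M * P).trace
      = ∑ l ∈ range (K + 1), (M * twist c P l).trace := by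
        rw [← trace_mul_pinch, ← smul_eq_mul, ← trace_smul, ← Matrix.mul_smul,
          ← sum_range_twist c hK, Matrix.mul_sum, trace_sum]
    _ = (M * P).trace + ∑ l ∈ range K, (M * twist c P (l + 1)).trace := by
        rw [sum_range_succ', twist_zero, add_comm]
    _ ≤ (M * P).trace + ∑ l ∈ range K, S := by
        gcongr with l
        exact hS _ (hP.twist c _)
    _ = (M * P).trace + (((K + 1 : ℕ) : ℝ) - 1) * S := by simp

end Pinching

lemma dotProduct_mulVec_le_of_sum_le {ι : Type*} [Fintype ι] {B : Matrix ι ι ℝ} {d : ℝ}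
    (hB : B.IsSymm) (hB0 : ∀ u v, 0 ≤ B u v) (hrow : ∀ u, ∑ v, B u v ≤ d) (x : ι → ℝ) :
    x ⬝ᵥ B *ᵥ x ≤ d * (x ⬝ᵥ x) := by
  have hswap : ∑ u, ∑ v, B u v * x v ^ 2 = ∑ u, ∑ v, B u v * x u ^ 2 := by
    rw [sum_comm]
    simp_rw [hB.apply]
  calc x ⬝ᵥ B *ᵥ x = ∑ u, ∑ v, B u v * (x u * x v) := by
        simp only [dotProduct, mulVec, mul_sum]
        exact sum_congr rfl fun u _ => sum_congr rfl fun v _ => by ring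
    _ ≤ ∑ u, ∑ v, B u v * ((x u ^ 2 + x v ^ 2) / 2) := by
        gcongr with u _ v _
        · exact hB0 u v
        · nlinarith [sq_nonneg (x u - x v)]
    _ = ∑ u, (∑ v, B u v) * x u ^ 2 := by
        simp only [mul_add, add_div, sum_add_distrib, mul_div_assoc', ← sum_div, hswap, sum_mul]
        ring
    _ ≤ ∑ u, d * x u ^ 2 := by
        gcongr with u
        exact hrow u
    _ = d * (x ⬝ᵥ x) := by simp [dotProduct, mul_sum, sq]

lemma isImproperColoring_of_injective {V α : Type*} (G : SimpleGraph V) (d : ℕ) {c : V → α}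
    (hc : Function.Injective c) : IsImproperColoring G d c := fun v => by
  have hempty : {w | G.Adj v w ∧ c w = c v} = ∅ :=
    Set.eq_empty_of_forall_notMem fun w ⟨hadj, hw⟩ => G.loopless.irrefl v (hc hw ▸ hadj)
  simp [hempty]

lemma exists_isImproperColoring_improperChromaticNumber {V : Type*} [Fintype V]
    (G : SimpleGraph V) (d : ℕ) :
    ∃ c : V → Fin (improperChromaticNumber G d), IsImproperColoring G d c :=
  Nat.sInf_mem (s := {k | ∃ c : V → Fin k, IsImproperColoring G d c})
    ⟨_, _, isImproperColoring_of_injective G d (Fintype.equivFin V).injective⟩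

lemma improperChromaticNumber_ne_zero {V : Type*} [Fintype V] [Nonempty V]
    (G : SimpleGraph V) (d : ℕ) :
    improperChromaticNumber G d ≠ 0 := fun h => by
  obtain ⟨c, -⟩ := exists_isImproperColoring_improperChromaticNumber G d
  exact (h ▸ c (Classical.arbitrary V)).elim0

section Graph

variable {V : Type*} (G : SimpleGraph V) [DecidableRel G.Adj] {K : ℕ} (c : V → Fin K)

lemma pinch_lapMatrix [Fintype V] [DecidableEq V] :
    pinch c (G.lapMatrix ℝ) = G.degMatrix ℝ - pinch c (G.adjMatrix ℝ) := by
  ext u v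
  by_cases huv : u = v
  · subst huv
    simp [pinch, lapMatrix]
  · by_cases h : c u = c v <;> simp [pinch, lapMatrix, degMatrix, h, huv]

lemma pinch_adjMatrix_of_injective (hc : Function.Injective c) :
    pinch c (G.adjMatrix ℝ) = 0 := by
  ext u v
  by_cases h : c u = c v
  · simp [pinch, hc h]
  · simp [pinch, h]

lemma sum_pinch_adjMatrix [Fintype V] (u : V) :
    ∑ v, pinch c (G.adjMatrix ℝ) u v = ({w | G.Adj u w ∧ c w = c u} : Set V).ncard := by
  rw [Set.ncard_eq_toFinset_card', Set.toFinset_ofPred, card_filter]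
  push_cast
  exact sum_congr rfl fun v _ => by
    by_cases h : c u = c v <;> by_cases hadj : G.Adj u v <;> simp [pinch, h, hadj, eq_comm]

lemma trace_pinch_adjMatrix_mul_le [Fintype V] [DecidableEq V] {d : ℕ}
    (hc : IsImproperColoring G d c) {P : Matrix V V ℝ} {m : ℕ} (hP : IsFracProj P m) :
    (pinch c (G.adjMatrix ℝ) * P).trace ≤ d * m := by
  have hsymm := isSymm_pinch c (G.isSymm_adjMatrix (α := ℝ))
  refine trace_mul_le_of_dotProduct_mulVec_le (isHermitian_iff_isSymm.mpr hsymm)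
    (dotProduct_mulVec_le_of_sum_le hsymm (fun u v => ?_) (fun u => ?_)) hP
  · by_cases h : c u = c v <;> by_cases hadj : G.Adj u v <;> simp [pinch, h, hadj]
  · rw [sum_pinch_adjMatrix]
    exact_mod_cast hc u

end Graph

section Bound

variable {n : ℕ} {G : SimpleGraph (Fin n)} [DecidableRel G.Adj] {m : ℕ}
  {hA : (G.adjMatrix ℝ).IsHermitian} {lam : Fin n → ℝ}
  {hL : (G.lapMatrix ℝ).IsHermitian} {mu : Fin n → ℝ}
  {hQ : (G.degMatrix ℝ + G.adjMatrix ℝ).IsHermitian} {th : Fin n → ℝ}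
  {P : Matrix (Fin n) (Fin n) ℝ}

lemma trace_degMatrix_mul_le (hm : 0 < m) (hmn : m ≤ n) (hmu : IsEigList hL mu)
    (hP : IsFracProj P m) :
    (G.degMatrix ℝ * P).trace ≤ leadingSum mu m := by
  have hkyFan := fun P' (hP' : IsFracProj P' m) => trace_mul_le_leadingSum hm hmn hmu hP'
  have hpinch := pinching_trace_le (id : Fin n → Fin n) (by omega) hkyFan hP
  rw [pinch_lapMatrix, pinch_adjMatrix_of_injective G _ Function.injective_id, sub_zero] at hpinch
  have hn : (0 : ℝ) < n := by exact_mod_cast hm.trans_le hmn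
  nlinarith [hkyFan P hP]

lemma trace_mul_le_of_isImproperColoring (hm : 0 < m) (hmn : m ≤ n) (hmu : IsEigList hL mu)
    (hP : IsFracProj P m) {d K : ℕ} (hK : K ≠ 0) {c : Fin n → Fin K}
    (hc : IsImproperColoring G d c) :
    (K - 1) * (G.degMatrix ℝ * P).trace + (G.adjMatrix ℝ * P).trace ≤
      (K - 1) * leadingSum mu m + K * (d * m) := by
  have hpinch :=
    pinching_trace_le c hK (fun P' hP' => trace_mul_le_leadingSum hm hmn hmu hP') hP
  rw [pinch_lapMatrix, lapMatrix, Matrix.sub_mul, Matrix.sub_mul, trace_sub, trace_sub] at hpinch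
  have hB := trace_pinch_adjMatrix_mul_le G c hc hP
  nlinarith [mul_le_mul_of_nonneg_left hB (Nat.cast_nonneg K)]

lemma leadingSum_signlessLap_le (hm : 0 < m) (hmn : m ≤ n) (hlam : IsEigList hA lam)
    (hmu : IsEigList hL mu) (hth : IsEigList hQ th) :
    leadingSum th m ≤ leadingSum lam m + leadingSum mu m := by
  obtain ⟨P, hP, hPth⟩ := exists_isFracProj_trace_mul_eq hmn hth
  rw [Matrix.add_mul, trace_add] at hPth
  linarith [trace_mul_le_leadingSum hm hmn hlam hP, trace_degMatrix_mul_le hm hmn hmu hP]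

lemma sub_one_mul_leadingSum_signlessLap_le (hm : 0 < m) (hmn : m ≤ n)
    (hlam : IsEigList hA lam) (hmu : IsEigList hL mu) (hth : IsEigList hQ th) {d K : ℕ}
    (hK : K ≠ 0) {c : Fin n → Fin K} (hc : IsImproperColoring G d c) :
    (K - 1) * leadingSum th m ≤
      K * (d * m) + (K - 2) * leadingSum lam m + (K - 1) * leadingSum mu m := by
  obtain rfl | hK2 : K = 1 ∨ 2 ≤ K := by omega
  · -- with one colour, `A` itself has row sums at most `d`
    obtain ⟨P, hP, hPlam⟩ := exists_isFracProj_trace_mul_eq hmn hlam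
    have hcol := trace_mul_le_of_isImproperColoring hm hmn hmu hP hK hc
    norm_num at hcol ⊢
    linarith
  · obtain ⟨P, hP, hPth⟩ := exists_isFracProj_trace_mul_eq hmn hth
    rw [Matrix.add_mul, trace_add] at hPth
    have hcol := trace_mul_le_of_isImproperColoring hm hmn hmu hP hK hc
    have hK2' : (2 : ℝ) ≤ K := by exact_mod_cast hK2
    nlinarith [mul_le_mul_of_nonneg_left (trace_mul_le_leadingSum hm hmn hlam hP)
      (sub_nonneg.mpr hK2')]

end Bound

end ImproperPaper

open ImproperPaper in

theorem stmt_15_general {n : ℕ} (G : SimpleGraph (Fin n)) [DecidableRel G.Adj] (d m : ℕ)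
    (hm : 0 < m) (hmn : m ≤ n)
    (hA : (G.adjMatrix ℝ).IsHermitian) (lam : Fin n → ℝ) (hlam : IsEigList hA lam)
    (hL : (G.lapMatrix ℝ).IsHermitian) (mu : Fin n → ℝ) (hmu : IsEigList hL mu)
    (hQ : (G.degMatrix ℝ + G.adjMatrix ℝ).IsHermitian) (th : Fin n → ℝ)
    (hth : IsEigList hQ th) :
    1 + (-(d * m : ℝ) + ∑ i ∈ Finset.univ.filter (fun i : Fin n => (i : ℕ) < m), lam i) /
        ((d * m : ℝ) +
          ∑ i ∈ Finset.univ.filter (fun i : Fin n => (i : ℕ) < m), (lam i + mu i - th i)) ≤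
      (improperChromaticNumber G d : ℝ) := by
  have : Nonempty (Fin n) := ⟨⟨0, hm.trans_le hmn⟩⟩
  obtain ⟨c, hc⟩ := exists_isImproperColoring_improperChromaticNumber G d
  have hK := improperChromaticNumber_ne_zero G d
  have hkey := sub_one_mul_leadingSum_signlessLap_le hm hmn hlam hmu hth hK hc
  have hK1 : (1 : ℝ) ≤ improperChromaticNumber G d := by
    exact_mod_cast Nat.one_le_iff_ne_zero.mpr hK
  rw [sum_sub_distrib, sum_add_distrib]
  change 1 + (-(d * m : ℝ) + leadingSum lam m) /
    ((d * m : ℝ) + (leadingSum lam m + leadingSum mu m - leadingSum th m)) ≤ _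
  have hden : 0 ≤ (d * m : ℝ) + (leadingSum lam m + leadingSum mu m - leadingSum th m) := by
    have : (0 : ℝ) ≤ d * m := by positivity
    linarith [leadingSum_signlessLap_le hm hmn hlam hmu hth]
  rcases hden.eq_or_lt with h0 | hpos
  · -- a zero denominator leaves `1 + x / 0 = 1`
    rw [← h0, div_zero]
    linarith
  · rw [← le_sub_iff_add_le', div_le_iff₀ hpos]
    nlinarith

open ImproperPaper in
theorem stmt_15 {n : ℕ} (G : SimpleGraph (Fin n)) [DecidableRel G.Adj] (d m : ℕ)
    (hd : 0 < d) (hm : 0 < m) (hmn : m ≤ n)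
    (hA : (G.adjMatrix ℝ).IsHermitian) (lam : Fin n → ℝ) (hlam : IsEigList hA lam)
    (hL : (G.lapMatrix ℝ).IsHermitian) (mu : Fin n → ℝ) (hmu : IsEigList hL mu)
    (hQ : (G.degMatrix ℝ + G.adjMatrix ℝ).IsHermitian) (th : Fin n → ℝ)
    (hth : IsEigList hQ th) :
    1 + (-(d * m : ℝ) + ∑ i ∈ Finset.univ.filter (fun i : Fin n => (i : ℕ) < m), lam i) /
        ((d * m : ℝ) +
          ∑ i ∈ Finset.univ.filter (fun i : Fin n => (i : ℕ) < m), (lam i + mu i - th i)) ≤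
      (improperChromaticNumber G d : ℝ) :=
  stmt_15_general G d m hm hmn hA lam hlam hL mu hmu hQ th hth
end

section
/- Let A be the adjacency matrix of a finite simple graph G on n vertices with χ^d(G) = c ≥ 2 for an integer d ≥ 0. Then for every real diagonal n × n matrix X and every m with 1 ≤ m ≤ n, Σ_{i=1}^m λ_i^↓(X − A) ≥ Σ_{i=1}^m λ_i^↓(X + A/(c−1)) − cdm/(c−1), where λ_i^↓(M) denotes the i-th largest eigenvalue of a real symmetric matrix M. -/
open SimpleGraph Finset Matrix

/-!
Fix a `d`-improper colouring `f` with `c` colours and a primitive `c`-th root of unity `ω`.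
Twisting the top `m` orthonormal eigenvectors `yᵢ` of `X + A/(c-1)` by the unitary diagonal
matrices `diag (ω ^ (k f v))`, `1 ≤ k < c`, gives for each `k` an orthonormal family of `ℂⁿ`, so
by Ky Fan's maximum principle its Rayleigh quotients for `X - A` sum to at most the sum of the `m`
largest eigenvalues of `X - A`. Summed over `k`, the phases average to `c [f u = f v] - 1`, which
turns `X - A` into `(c-1) (X + A/(c-1)) - c A_f`, where `A_f` is the adjacency matrix of the
monochromatic subgraph; the quadratic form of `A_f` is at most `d` on unit vectors since that
subgraph has maximum degree at most `d`.
-/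

theorem Antitone.sum_mul_le_sum_filter_lt {n m : ℕ} {lam p : Fin n → ℝ} (hlam : Antitone lam)
    (hp0 : ∀ j, 0 ≤ p j) (hp1 : ∀ j, p j ≤ 1) (hps : ∑ j, p j = m) :
    ∑ j, lam j * p j ≤ ∑ j ∈ univ.filter (fun j : Fin n => (j : ℕ) < m), lam j := by
  rcases Nat.eq_zero_or_pos n with rfl | hn
  · simp
  have hmn : m ≤ n := by
    have : ∑ j, p j ≤ ∑ _j : Fin n, (1 : ℝ) := sum_le_sum fun j _ => hp1 j
    simp only [sum_const, card_univ, Fintype.card_fin, nsmul_eq_mul, mul_one, hps] at this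
    exact_mod_cast this
  -- `t` separates the `m` largest values of `lam` from the others
  set t := lam ⟨min m (n - 1), by omega⟩
  have key : ∀ j, lam j * p j ≤ (if (j : ℕ) < m then lam j else 0) +
      t * (p j - if (j : ℕ) < m then 1 else 0) := by
    intro j
    by_cases hj : (j : ℕ) < m
    · have : t ≤ lam j := hlam (show (j : ℕ) ≤ min m (n - 1) by omega)
      simp only [hj, if_true]
      nlinarith [hp1 j]
    · have : lam j ≤ t := hlam (show min m (n - 1) ≤ (j : ℕ) by omega)
      simp only [hj, if_false]
      nlinarith [hp0 j]
  calc ∑ j, lam j * p j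
      ≤ ∑ j : Fin n,
          ((if (j : ℕ) < m then lam j else 0) + t * (p j - if (j : ℕ) < m then 1 else 0)) :=
        sum_le_sum fun j _ => key j
    _ = ∑ j ∈ univ.filter (fun j : Fin n => (j : ℕ) < m), lam j := by
        rw [sum_add_distrib, ← mul_sum, sum_sub_distrib, hps, ← sum_filter, sum_boole,
          Fin.card_filter_val_lt, min_eq_right hmn]
        simp

theorem OrthonormalBasis.sum_re_inner_le {𝕜 E : Type*} [RCLike 𝕜] [NormedAddCommGroup E]
    [InnerProductSpace 𝕜 E] {n m : ℕ} (b : OrthonormalBasis (Fin n) 𝕜 E) {lam : Fin n → ℝ}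
    (hlam : Antitone lam) {T : E →ₗ[𝕜] E} (hT : ∀ j, T (b j) = (lam j : 𝕜) • b j)
    {ι : Type*} {z : ι → E} (hz : Orthonormal 𝕜 z) {s : Finset ι} (hs : #s = m) :
    ∑ i ∈ s, RCLike.re (inner 𝕜 (z i) (T (z i))) ≤
      ∑ j ∈ univ.filter (fun j : Fin n => (j : ℕ) < m), lam j := by
  have hform : ∀ x, RCLike.re (inner 𝕜 x (T x)) = ∑ j, lam j * ‖inner 𝕜 (b j) x‖ ^ 2 := by
    intro x
    have hTx : T x = ∑ j, ((lam j : 𝕜) * inner 𝕜 (b j) x) • b j := by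
      conv_lhs => rw [← b.sum_repr' x]
      simp only [map_sum, map_smul, hT, smul_smul, mul_comm]
    rw [hTx, inner_sum, map_sum]
    refine sum_congr rfl fun j _ => ?_
    rw [inner_smul_right, ← inner_conj_symm x (b j), mul_assoc, RCLike.mul_conj]
    norm_cast
  have hp1 : ∀ j, ∑ i ∈ s, ‖inner 𝕜 (b j) (z i)‖ ^ 2 ≤ 1 := by
    intro j
    simpa only [norm_inner_symm, b.orthonormal.1 j, one_pow] using hz.sum_inner_products_le (b j)
  have hps : ∑ j, ∑ i ∈ s, ‖inner 𝕜 (b j) (z i)‖ ^ 2 = m := by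
    rw [sum_comm]
    simp only [b.sum_sq_norm_inner_right, hz.1, one_pow, sum_const, hs, nsmul_eq_mul, mul_one]
  calc ∑ i ∈ s, RCLike.re (inner 𝕜 (z i) (T (z i)))
      = ∑ j, lam j * ∑ i ∈ s, ‖inner 𝕜 (b j) (z i)‖ ^ 2 := by
        simp only [hform, mul_sum]
        exact sum_comm
    _ ≤ _ := hlam.sum_mul_le_sum_filter_lt (fun j => sum_nonneg fun i _ => by positivity) hp1 hps

section Twist

variable {ι : Type*} [Fintype ι]

def twist (g : ι → ℂ) (x : EuclideanSpace ℝ ι) : EuclideanSpace ℂ ι :=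
  WithLp.toLp 2 fun v => g v * x v

theorem inner_twist {g : ι → ℂ} (hg : ∀ v, ‖g v‖ = 1) (x y : EuclideanSpace ℝ ι) :
    inner ℂ (twist g x) (twist g y) = (inner ℝ x y : ℂ) := by
  simp only [twist, EuclideanSpace.inner_eq_star_dotProduct, dotProduct, Pi.star_apply,
    star_mul', RCLike.star_def, Complex.conj_ofReal, conj_trivial, Complex.ofReal_sum,
    Complex.ofReal_mul]
  refine sum_congr rfl fun v _ => ?_
  have hv : g v * starRingEnd ℂ (g v) = 1 := by simp [RCLike.mul_conj, hg v]
  linear_combination (y v * x v : ℂ) * hv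

theorem Orthonormal.twist {κ : Type*} {y : κ → EuclideanSpace ℝ ι} (hy : Orthonormal ℝ y)
    {g : ι → ℂ} (hg : ∀ v, ‖g v‖ = 1) : Orthonormal ℂ fun i => twist g (y i) := by
  classical
  rw [orthonormal_iff_ite] at hy ⊢
  intro i j
  rw [inner_twist hg, hy]
  split_ifs <;> simp

variable [DecidableEq ι]

theorem toEuclideanLin_map_ofReal_twist_one {M : Matrix ι ι ℝ} {x : EuclideanSpace ℝ ι} {μ : ℝ}
    (hx : M *ᵥ x = μ • x) :
    toEuclideanLin (M.map (↑)) (twist 1 x) = (μ : ℂ) • twist 1 x := by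
  ext u
  have := congrArg (fun r : ℝ => (r : ℂ)) (congrFun hx u)
  simp only [mulVec, dotProduct, Complex.ofReal_sum, Complex.ofReal_mul, Pi.smul_apply,
    smul_eq_mul] at this
  simpa [toLpLin_apply, twist, mulVec, dotProduct] using this

end Twist

theorem Matrix.IsHermitian.sum_re_inner_le {n m : ℕ} {M : Matrix (Fin n) (Fin n) ℝ}
    (hM : M.IsHermitian) {lam : Fin n → ℝ} (hlam : ImproperPaper.IsEigList hM lam) {ι : Type*}
    {z : ι → EuclideanSpace ℂ (Fin n)} (hz : Orthonormal ℂ z) {s : Finset ι} (hs : #s = m) :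
    ∑ i ∈ s, (inner ℂ (z i) (toEuclideanLin (M.map (↑)) (z i))).re ≤
      ∑ j ∈ univ.filter (fun j : Fin n => (j : ℕ) < m), lam j := by
  obtain ⟨hanti, σ, rfl⟩ := hlam
  have hon : Orthonormal ℂ fun j => twist 1 (hM.eigenvectorBasis (σ j)) :=
    (hM.eigenvectorBasis.orthonormal.comp σ σ.injective).twist fun _ => norm_one
  let b := OrthonormalBasis.mk hon
    (hon.linearIndependent.span_eq_top_of_card_eq_finrank' (by simp)).ge
  refine b.sum_re_inner_le hanti (fun j => ?_) hz hs
  simpa [b] using toEuclideanLin_map_ofReal_twist_one (hM.mulVec_eigenvectorBasis (σ j))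

theorem IsPrimitiveRoot.sum_Ico_conj_pow_mul_pow {ω : ℂ} {c : ℕ} (hω : IsPrimitiveRoot ω c)
    (a b : Fin c) :
    ∑ k ∈ Ico 1 c, starRingEnd ℂ (ω ^ (k * (a : ℕ))) * ω ^ (k * (b : ℕ)) =
      if a = b then (c : ℂ) - 1 else -1 := by
  have hc : c ≠ 0 := by have := a.pos; omega
  have hnorm : ∀ j : ℕ, starRingEnd ℂ (ω ^ j) * ω ^ j = 1 := fun j => by
    rw [RCLike.conj_mul, norm_pow, hω.norm'_eq_one hc]
    simp
  set ζ := starRingEnd ℂ (ω ^ (a : ℕ)) * ω ^ (b : ℕ) with hζdef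
  have hζ : ∀ k : ℕ, starRingEnd ℂ (ω ^ (k * (a : ℕ))) * ω ^ (k * (b : ℕ)) = ζ ^ k := fun k => by
    rw [mul_pow, ← map_pow, ← pow_mul, ← pow_mul, mul_comm k, mul_comm k]
  have hrange : ∑ k ∈ range c, ζ ^ k = 1 + ∑ k ∈ Ico 1 c, ζ ^ k := by
    rw [range_eq_Ico, sum_eq_sum_Ico_succ_bot (Nat.pos_of_ne_zero hc), pow_zero]
  simp only [hζ]
  split_ifs with hab
  · subst hab
    have : ζ = 1 := hnorm a
    simp only [this, one_pow, sum_const, Nat.card_Ico, nsmul_eq_mul, mul_one]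
    rw [Nat.cast_sub (by omega), Nat.cast_one]
  · have hζc : ζ ^ c = 1 := by
      rw [mul_pow, ← map_pow, ← pow_mul, ← pow_mul, mul_comm _ c, mul_comm _ c, pow_mul, pow_mul,
        hω.pow_eq_one, one_pow, one_pow, map_one, one_mul]
    have hζ1 : ζ ≠ 1 := fun h => hab <| Fin.ext <| hω.pow_inj a.2 b.2 <| by
      linear_combination -ω ^ (a : ℕ) * h + ω ^ (b : ℕ) * hnorm a + ω ^ (a : ℕ) * hζdef
    have := geom_sum_eq hζ1 c
    rw [hζc, sub_self, zero_div, hrange] at this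
    linear_combination this

/-- The Gram matrix of the phase vectors `(ω ^ (k f v))_{1 ≤ k < c}`, `v ∈ V`. -/
def colourGram {V : Type*} {c : ℕ} (f : V → Fin c) : Matrix V V ℝ :=
  of fun u v => if f u = f v then (c : ℝ) - 1 else -1

theorem sum_inner_twist_pow {V : Type*} [Fintype V] [DecidableEq V] {ω : ℂ} {c : ℕ}
    (hω : IsPrimitiveRoot ω c) (f : V → Fin c) (M : Matrix V V ℝ) (y : EuclideanSpace ℝ V) :
    ∑ k ∈ Ico 1 c, inner ℂ (twist (fun v => ω ^ (k * (f v : ℕ))) y)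
        (toEuclideanLin (M.map (↑)) (twist (fun v => ω ^ (k * (f v : ℕ))) y)) =
      ((y.ofLp ⬝ᵥ (colourGram f ⊙ M) *ᵥ y.ofLp : ℝ) : ℂ) := by
  simp only [EuclideanSpace.inner_eq_star_dotProduct, toLpLin_apply, twist, dotProduct, mulVec,
    Pi.star_apply, star_mul', RCLike.star_def, Complex.conj_ofReal, map_apply, hadamard,
    colourGram, of_apply, Complex.ofReal_sum, Complex.ofReal_mul, sum_mul, mul_sum]
  rw [sum_comm]
  refine sum_congr rfl fun u _ => ?_
  rw [sum_comm]
  refine sum_congr rfl fun v _ => ?_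
  have hchar := hω.sum_Ico_conj_pow_mul_pow (f u) (f v)
  calc _ = (∑ k ∈ Ico 1 c, starRingEnd ℂ (ω ^ (k * (f u : ℕ))) * ω ^ (k * (f v : ℕ))) *
        (M u v * y u * y v) := by
        rw [sum_mul]
        exact sum_congr rfl fun k _ => by ring
    _ = _ := by
        rw [hchar]
        split_ifs <;> push_cast <;> ring

namespace SimpleGraph

variable {V : Type*}

def monochromaticSubgraph {α : Type*} (G : SimpleGraph V) (f : V → α) : SimpleGraph V where
  Adj u v := G.Adj u v ∧ f u = f v
  symm := ⟨fun _ _ h => ⟨h.1.symm, h.2.symm⟩⟩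
  loopless := ⟨fun _ h => G.loopless.irrefl _ h.1⟩

@[simp]
theorem monochromaticSubgraph_adj {α : Type*} {G : SimpleGraph V} {f : V → α} {u v : V} :
    (G.monochromaticSubgraph f).Adj u v ↔ G.Adj u v ∧ f u = f v :=
  Iff.rfl

instance {α : Type*} (G : SimpleGraph V) [DecidableRel G.Adj] [DecidableEq α] (f : V → α) :
    DecidableRel (G.monochromaticSubgraph f).Adj :=
  fun u v => inferInstanceAs (Decidable (G.Adj u v ∧ f u = f v))

theorem degree_monochromaticSubgraph_le [Fintype V] {G : SimpleGraph V} [DecidableRel G.Adj]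
    {d : ℕ} {α : Type*} [DecidableEq α] {f : V → α}
    (hf : ImproperPaper.IsImproperColoring G d f) (v : V) :
    (G.monochromaticSubgraph f).degree v ≤ d := by
  rw [← card_neighborFinset_eq_degree, ← Set.ncard_coe_finset, coe_neighborFinset]
  convert hf v using 3
  ext w
  simp [eq_comm]

theorem dotProduct_adjMatrix_mulVec_le [Fintype V] [DecidableEq V] (H : SimpleGraph V)
    [DecidableRel H.Adj] {d : ℕ} (hd : ∀ v, H.degree v ≤ d) (y : V → ℝ) :
    y ⬝ᵥ H.adjMatrix ℝ *ᵥ y ≤ d * (y ⬝ᵥ y) := by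
  have hlap := (H.posSemidef_lapMatrix ℝ).dotProduct_mulVec_nonneg y
  have hdeg : y ⬝ᵥ H.degMatrix ℝ *ᵥ y ≤ d * (y ⬝ᵥ y) := by
    simp only [degMatrix, mulVec_diagonal, dotProduct, mul_sum]
    refine sum_le_sum fun v _ => ?_
    have : (H.degree v : ℝ) ≤ d := by exact_mod_cast hd v
    nlinarith [mul_self_nonneg (y v)]
  simp only [lapMatrix, sub_mulVec, dotProduct_sub, star_trivial] at hlap
  linarith

end SimpleGraph

theorem colourGram_hadamard_sub_adjMatrix {V : Type*} (G : SimpleGraph V) [DecidableRel G.Adj]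
    {c : ℕ} (hc : c ≠ 1) (f : V → Fin c) {X : Matrix V V ℝ} (hX : X.IsDiag) :
    colourGram f ⊙ (X - G.adjMatrix ℝ) =
      ((c : ℝ) - 1) • (X + ((c : ℝ) - 1)⁻¹ • G.adjMatrix ℝ) -
        (c : ℝ) • (G.monochromaticSubgraph f).adjMatrix ℝ := by
  have hc' : (c : ℝ) - 1 ≠ 0 := sub_ne_zero.2 (by exact_mod_cast hc)
  ext u v
  simp only [colourGram, hadamard, of_apply, Matrix.sub_apply, Matrix.add_apply,
    Matrix.smul_apply, smul_eq_mul, adjMatrix_apply, monochromaticSubgraph_adj]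
  by_cases huv : u = v
  · subst huv
    simp
  · rw [hX huv]
    by_cases hadj : G.Adj u v <;> by_cases hf : f u = f v <;> simp [hadj, hf, hc']

theorem le_sum_re_inner_twist_pow {V : Type*} [Fintype V] [DecidableEq V]
    {G : SimpleGraph V} [DecidableRel G.Adj] {d c : ℕ} {ω : ℂ} (hω : IsPrimitiveRoot ω c)
    (hc : c ≠ 1) {f : V → Fin c} (hf : ImproperPaper.IsImproperColoring G d f)
    {X : Matrix V V ℝ} (hX : X.IsDiag) {y : EuclideanSpace ℝ V} {μ : ℝ}
    (hy : (X + ((c : ℝ) - 1)⁻¹ • G.adjMatrix ℝ) *ᵥ y.ofLp = μ • y.ofLp) (hy1 : ‖y‖ = 1) :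
    ((c : ℝ) - 1) * μ - c * d ≤
      ∑ k ∈ Ico 1 c, (inner ℂ (twist (fun v => ω ^ (k * (f v : ℕ))) y)
        (toEuclideanLin ((X - G.adjMatrix ℝ).map (↑))
          (twist (fun v => ω ^ (k * (f v : ℕ))) y))).re := by
  have hyy : y.ofLp ⬝ᵥ y.ofLp = 1 := by
    have := real_inner_self_eq_norm_sq y
    rwa [hy1, one_pow, EuclideanSpace.inner_eq_star_dotProduct, star_trivial] at this
  have hmono := (G.monochromaticSubgraph f).dotProduct_adjMatrix_mulVec_le
    (SimpleGraph.degree_monochromaticSubgraph_le hf) y.ofLp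
  rw [← Complex.re_sum, sum_inner_twist_pow hω, Complex.ofReal_re,
    colourGram_hadamard_sub_adjMatrix G hc f hX, sub_mulVec, smul_mulVec, smul_mulVec, hy,
    dotProduct_sub, dotProduct_smul, dotProduct_smul, dotProduct_smul, hyy]
  rw [hyy] at hmono
  simp only [smul_eq_mul, mul_one]
  nlinarith [Nat.cast_nonneg (α := ℝ) c]

theorem ImproperPaper.exists_isImproperColoring {V : Type*} [Finite V] (G : SimpleGraph V)
    (d : ℕ) : ∃ f : V → Fin (improperChromaticNumber G d), IsImproperColoring G d f := by
  refine Nat.sInf_mem (s := {k | ∃ f : V → Fin k, IsImproperColoring G d f})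
    ⟨Nat.card V, Finite.equivFin V, fun v => ?_⟩
  convert Nat.zero_le d
  rw [Set.ncard_eq_zero]
  ext w
  simpa using fun h hw => G.ne_of_adj h ((Finite.equivFin V).injective hw).symm

open ImproperPaper in

theorem stmt_16_general {n : ℕ} (G : SimpleGraph (Fin n)) [DecidableRel G.Adj] (d c m : ℕ)
    (hc : improperChromaticNumber G d = c) (hc2 : 2 ≤ c) (hmn : m ≤ n)
    (X : Matrix (Fin n) (Fin n) ℝ) (hX : X.IsDiag)
    (h1 : (X - G.adjMatrix ℝ).IsHermitian) (al : Fin n → ℝ) (hal : IsEigList h1 al)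
    (h2 : (X + ((c : ℝ) - 1)⁻¹ • G.adjMatrix ℝ).IsHermitian) (be : Fin n → ℝ)
    (hbe : IsEigList h2 be) :
    (∑ i ∈ Finset.univ.filter (fun i : Fin n => (i : ℕ) < m), be i) -
        (c : ℝ) * d * m / ((c : ℝ) - 1) ≤
      ∑ i ∈ Finset.univ.filter (fun i : Fin n => (i : ℕ) < m), al i := by
  obtain ⟨f, hf⟩ : ∃ f : Fin n → Fin c, IsImproperColoring G d f :=
    hc ▸ exists_isImproperColoring G d
  obtain ⟨-, σ, hσ⟩ := hbe
  set F := univ.filter fun i : Fin n => (i : ℕ) < m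
  have hF : #F = m := by simp [F, Fin.card_filter_val_lt, hmn]
  set ω := Complex.exp (2 * Real.pi * Complex.I / c)
  have hω : IsPrimitiveRoot ω c := Complex.isPrimitiveRoot_exp c (by omega)
  set z := fun (k : ℕ) i => twist (fun v => ω ^ (k * (f v : ℕ))) (h2.eigenvectorBasis (σ i))
  set q := fun k i => (inner ℂ (z k i) (toEuclideanLin ((X - G.adjMatrix ℝ).map (↑)) (z k i))).re
  have hKyFan : ∀ k, ∑ i ∈ F, q k i ≤ ∑ i ∈ F, al i := fun k =>
    h1.sum_re_inner_le hal ((h2.eigenvectorBasis.orthonormal.comp σ σ.injective).twist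
      fun v => by simp [hω.norm'_eq_one (by omega)]) hF
  have havg : ∀ i, ((c : ℝ) - 1) * be i - c * d ≤ ∑ k ∈ Ico 1 c, q k i := fun i => by
    rw [hσ]
    exact le_sum_re_inner_twist_pow hω (by omega) hf hX (h2.mulVec_eigenvectorBasis (σ i))
      (h2.eigenvectorBasis.orthonormal.1 (σ i))
  have hsum : ∑ i ∈ F, (((c : ℝ) - 1) * be i - c * d) ≤ ((c : ℝ) - 1) * ∑ i ∈ F, al i :=
    calc _ ≤ ∑ k ∈ Ico 1 c, ∑ i ∈ F, q k i := by
          rw [sum_comm]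
          exact sum_le_sum fun i _ => havg i
      _ ≤ ∑ _k ∈ Ico 1 c, ∑ i ∈ F, al i := sum_le_sum fun k _ => hKyFan k
      _ = ((c : ℝ) - 1) * ∑ i ∈ F, al i := by
          rw [sum_const, Nat.card_Ico, nsmul_eq_mul, Nat.cast_sub (by omega), Nat.cast_one]
  rw [sum_sub_distrib, ← mul_sum, sum_const, hF, nsmul_eq_mul] at hsum
  rw [sub_le_iff_le_add, ← sub_le_iff_le_add', le_div_iff₀ (sub_pos.2 (by exact_mod_cast hc2))]
  linarith

open ImproperPaper in
theorem stmt_16 {n : ℕ} (G : SimpleGraph (Fin n)) [DecidableRel G.Adj] (d c m : ℕ)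
    (hc : improperChromaticNumber G d = c) (hc2 : 2 ≤ c) (hm : 1 ≤ m) (hmn : m ≤ n)
    (X : Matrix (Fin n) (Fin n) ℝ) (hX : X.IsDiag)
    (h1 : (X - G.adjMatrix ℝ).IsHermitian) (al : Fin n → ℝ) (hal : IsEigList h1 al)
    (h2 : (X + ((c : ℝ) - 1)⁻¹ • G.adjMatrix ℝ).IsHermitian) (be : Fin n → ℝ)
    (hbe : IsEigList h2 be) :
    (∑ i ∈ Finset.univ.filter (fun i : Fin n => (i : ℕ) < m), be i) -
        (c : ℝ) * d * m / ((c : ℝ) - 1) ≤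
      ∑ i ∈ Finset.univ.filter (fun i : Fin n => (i : ℕ) < m), al i :=
  stmt_16_general G d c m hc hc2 hmn X hX h1 al hal h2 be hbe
end
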